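/- Let g be a 2m-dimensional real Lie algebra whose derived algebra [g,g] has dimension r. Then every almost complex structure J on g has rank of Nijenhuis tensor at most r; in particular, if r < m then g admits no maximally non-integrable almost complex structure (one of rank m). -/

import Mathlib

open Matrix

noncomputable section

/-- Complexification of a real matrix. -/
def cplx {n : ℕ} (A : Matrix (Fin n) (Fin n) ℝ) : Matrix (Fin n) (Fin n) ℂ :=
  A.map Complex.ofReal

/-- The projector `(1/2)(Id + iJ)` of `V ⊗ ℂ` onto the `-i`-eigenspace `V^{0,1}` of the
complexified almost complex structure `J`. -/
def P01 {n : ℕ} (J : Matrix (Fin n) (Fin n) ℝ) : Matrix (Fin n) (Fin n) ℂ :=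
  (2⁻¹ : ℂ) • (1 + Complex.I • cplx J)

/-- The `(0,2)`-part of a complex 2-form `ω` (written as an antisymmetric matrix in the
real basis) with respect to the bigrading induced by `J`: `ω^{0,2}(x,y) = ω(P01 x, P01 y)`. -/
def proj02 {n : ℕ} (J : Matrix (Fin n) (Fin n) ℝ) (ω : Matrix (Fin n) (Fin n) ℂ) :
    Matrix (Fin n) (Fin n) ℂ :=
  (P01 J)ᵀ * ω * P01 J

/-- The Chevalley–Eilenberg differential on complex 1-forms, determined by its values
`Dd r = d e^r` on the dual basis: `d(Σ α_r e^r) = Σ α_r · (d e^r)`. -/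
def dC {n : ℕ} (Dd : Fin n → Matrix (Fin n) (Fin n) ℝ) (α : Fin n → ℂ) :
    Matrix (Fin n) (Fin n) ℂ :=
  ∑ r, α r • cplx (Dd r)

/-- The Chevalley–Eilenberg differential on real 1-forms, as a linear map. -/
def dR {n : ℕ} (Dd : Fin n → Matrix (Fin n) (Fin n) ℝ) :
    (Fin n → ℝ) →ₗ[ℝ] Matrix (Fin n) (Fin n) ℝ :=
  ∑ r, (LinearMap.proj r : (Fin n → ℝ) →ₗ[ℝ] ℝ).smulRight (Dd r)

/-- The rank of the Nijenhuis tensor of the almost complex structure `J`: the complex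
dimension of the image of `μ̄ = π^{0,2} ∘ d` on `(1,0)`-forms.  A complex covector `α` is
of type `(1,0)` iff it annihilates `V^{0,1}`, i.e. `α ∘ P01 = 0`. -/
def nijRank {n : ℕ} (Dd : Fin n → Matrix (Fin n) (Fin n) ℝ)
    (J : Matrix (Fin n) (Fin n) ℝ) : ℕ :=
  Module.finrank ℂ (Submodule.span ℂ
    {ω : Matrix (Fin n) (Fin n) ℂ |
      ∃ α : Fin n → ℂ, Matrix.vecMul α (P01 J) = 0 ∧ ω = proj02 J (dC Dd α)})

/-- The 2-form `e^a ∧ e^b`, as an antisymmetric matrix. -/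
def wR (a b : Fin 6) : Matrix (Fin 6) (Fin 6) ℝ :=
  fun p q => (if p = a ∧ q = b then 1 else 0) - (if p = b ∧ q = a then 1 else 0)

/-- The wedge product of two complex covectors, as an antisymmetric matrix. -/
def wedgeC {n : ℕ} (α β : Fin n → ℂ) : Matrix (Fin n) (Fin n) ℂ :=
  fun p q => α p * β q - α q * β p

/-! `μ̄ = π^{0,2} ∘ d`, so its image is the image under `π^{0,2}` of a subspace of
`d(g*_ℂ) = span_ℂ {d e^t}`. The dimension of that span is the row rank of the matrix of
structure constants `(t, (p, q)) ↦ (d e^t)(e_p, e_q)`; its column rank is `dim [g,g]`, and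
complexifying the real column vectors does not increase the dimension of their span. -/

open Submodule Module

section TowerSpan

variable {R A M N : Type*} [Field R] [DivisionRing A] [Algebra R A]
  [AddCommGroup M] [Module R M] [AddCommGroup N] [Module R N] [Module A N]
  [IsScalarTower R A N]

theorem finrank_span_image_le_finrank_span (f : M →ₗ[R] N) (s : Set M)
    [FiniteDimensional R (span R s)] :
    finrank A (span A (f '' s)) ≤ finrank R (span R s) := by
  let b := finBasis R (span R s)
  have hs : f '' s ⊆ span A (Set.range fun i => f (b i)) := by
    rintro _ ⟨x, hx, rfl⟩
    have hx' : ∑ i, b.repr ⟨x, subset_span hx⟩ i • (b i : M) = x := by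
      simpa only [coe_sum, coe_smul] using congrArg Subtype.val (b.sum_repr ⟨x, subset_span hx⟩)
    rw [← hx', map_sum]
    simp only [map_smul]
    exact sum_mem fun i _ => smul_of_tower_mem _ _ (subset_span ⟨i, rfl⟩)
  have := FiniteDimensional.span_of_finite A (Set.finite_range fun i => f (b i))
  calc finrank A (span A (f '' s))
      ≤ finrank A (span A (Set.range fun i => f (b i))) := finrank_mono (span_le.mpr hs)
    _ ≤ Fintype.card (Fin (finrank R (span R s))) := finrank_range_le_card _
    _ = finrank R (span R s) := Fintype.card_fin _

end TowerSpan

theorem finrank_span_range_eq_finrank_span_entries {ι m k K : Type*} [Field K] [Fintype ι]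
    [Fintype m] [Fintype k] (M : ι → Matrix m k K) :
    finrank K (span K (Set.range M)) =
      finrank K (span K (Set.range fun pq : m × k => fun t => M t pq.1 pq.2)) := by
  let B : Matrix ι (m × k) K := Matrix.of fun t pq => M t pq.1 pq.2
  have hcurry := LinearEquiv.finrank_map_eq (LinearEquiv.curry K K m k) (span K (Set.range B.row))
  rw [map_span, ← Set.range_comp] at hcurry
  calc finrank K (span K (Set.range M)) = finrank K (span K (Set.range B.row)) := hcurry
    _ = finrank K (span K (Set.range B.col)) := by
      rw [← B.rank_eq_finrank_span_row, B.rank_eq_finrank_span_cols]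

theorem dC_mem_span {n : ℕ} (Dd : Fin n → Matrix (Fin n) (Fin n) ℝ) (α : Fin n → ℂ) :
    dC Dd α ∈ span ℂ (Set.range fun t => cplx (Dd t)) :=
  sum_mem fun t _ => smul_mem _ _ (subset_span ⟨t, rfl⟩)

theorem nijRank_le_finrank_span_cplx {n : ℕ} (Dd : Fin n → Matrix (Fin n) (Fin n) ℝ)
    (J : Matrix (Fin n) (Fin n) ℝ) :
    nijRank Dd J ≤ finrank ℂ (span ℂ (Set.range fun t => cplx (Dd t))) := by
  let L := LinearMap.mulLeft ℂ (P01 J)ᵀ ∘ₗ LinearMap.mulRight ℂ (P01 J)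
  have hL : ∀ ω, L ω = proj02 J ω := fun ω => by simp [L, proj02, Matrix.mul_assoc]
  refine (finrank_mono (span_le.mpr ?_)).trans (finrank_map_le L _)
  rintro _ ⟨α, -, rfl⟩
  exact ⟨dC Dd α, dC_mem_span Dd α, hL _⟩

theorem finrank_span_cplx_le_finrank_span_entries {n : ℕ}
    (Dd : Fin n → Matrix (Fin n) (Fin n) ℝ) :
    finrank ℂ (span ℂ (Set.range fun t => cplx (Dd t))) ≤
      finrank ℝ (span ℝ {v : Fin n → ℝ | ∃ p q, v = fun t => (Dd t) p q}) := by
  have hentries : (Set.range fun pq : Fin n × Fin n => fun t => cplx (Dd t) pq.1 pq.2) =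
      (Algebra.linearMap ℝ ℂ).compLeft (Fin n) '' {v | ∃ p q, v = fun t => (Dd t) p q} := by
    ext v
    constructor
    · rintro ⟨⟨p, q⟩, rfl⟩
      exact ⟨fun t => Dd t p q, ⟨p, q, rfl⟩, rfl⟩
    · rintro ⟨_, ⟨p, q, rfl⟩, rfl⟩
      exact ⟨(p, q), rfl⟩
  rw [finrank_span_range_eq_finrank_span_entries, hentries]
  exact finrank_span_image_le_finrank_span _ _

theorem nijRank_le_derived_dim_general (m r : ℕ)
    (Dd : Fin (2 * m) → Matrix (Fin (2 * m)) (Fin (2 * m)) ℝ)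
    (hr : Module.finrank ℝ (Submodule.span ℝ
      {v : Fin (2 * m) → ℝ | ∃ p q, v = fun t => (Dd t) p q}) = r) :
    (∀ J : Matrix (Fin (2 * m)) (Fin (2 * m)) ℝ, J * J = -1 → nijRank Dd J ≤ r) ∧
      (r < m → ¬ ∃ J : Matrix (Fin (2 * m)) (Fin (2 * m)) ℝ,
        J * J = -1 ∧ nijRank Dd J = m) := by
  have hle (J : Matrix (Fin (2 * m)) (Fin (2 * m)) ℝ) : nijRank Dd J ≤ r :=
    hr ▸ (nijRank_le_finrank_span_cplx Dd J).trans (finrank_span_cplx_le_finrank_span_entries Dd)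
  refine ⟨fun J _ => hle J, ?_⟩
  rintro hrm ⟨J, -, hJ⟩
  exact absurd (hle J) (by omega)

/-- Let `g` be a `2m`-dimensional real Lie algebra whose derived algebra `[g,g]` has
dimension `r` (in coordinates, `[g,g]` is spanned by the vectors `t ↦ (d e^t)(e_p, e_q)`).
Then every almost complex structure `J` on `g` has Nijenhuis rank at most `r`;
in particular, if `r < m` then `g` admits no maximally non-integrable almost complex
structure (one of rank `m`). -/
theorem nijRank_le_derived_dim (m r : ℕ)
    (Dd : Fin (2 * m) → Matrix (Fin (2 * m)) (Fin (2 * m)) ℝ)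
    (hanti : ∀ r, (Dd r)ᵀ = -(Dd r))
    (hJacobi : ∀ p q r s, ∑ t, ((Dd t) p q * (Dd s) t r + (Dd t) q r * (Dd s) t p +
      (Dd t) r p * (Dd s) t q) = 0)
    (hr : Module.finrank ℝ (Submodule.span ℝ
      {v : Fin (2 * m) → ℝ | ∃ p q, v = fun t => (Dd t) p q}) = r) :
    (∀ J : Matrix (Fin (2 * m)) (Fin (2 * m)) ℝ, J * J = -1 → nijRank Dd J ≤ r) ∧
      (r < m → ¬ ∃ J : Matrix (Fin (2 * m)) (Fin (2 * m)) ℝ,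
        J * J = -1 ∧ nijRank Dd J = m) :=
  nijRank_le_derived_dim_general m r Dd hr
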